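/- Let K be a complete discretely valued field of residue characteristic 3 with uniformizer π_K, and let L = K(π_L) where π_L is a root of the Eisenstein polynomial f(X) = X^6 - π_K X^5 + π_K X^4 + π_K. Then L/K is totally ramified of degree 6 with indices of inseparability i_0 = 4 and i_1 = 0. -/

import Mathlib

open Polynomial Classical

/-- A rank-one valuation `v` on `L`, written additively with values in `ℚ` and
junk value at `0`, which restricts to a normalized (`ℤ`-valued, surjective onto
`ℤ`) complete discrete valuation on the subfield `K`, and whose values on `L`
lie in `(1/n)ℤ`. -/
structure ExtValuation (K L : Type) [Field K] [Field L] [Algebra K L]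
    (v : L → ℚ) (n : ℕ) : Prop where
  map_mul : ∀ x y : L, x ≠ 0 → y ≠ 0 → v (x * y) = v x + v y
  map_add : ∀ x y : L, x ≠ 0 → y ≠ 0 → x + y ≠ 0 → min (v x) (v y) ≤ v (x + y)
  int_on_base : ∀ x : K, x ≠ 0 → ∃ m : ℤ, v (algebraMap K L x) = m
  exists_uniformizer : ∃ x : K, x ≠ 0 ∧ v (algebraMap K L x) = 1
  denom : ∀ x : L, x ≠ 0 → ∃ m : ℤ, v x = (m : ℚ) / n
  complete : ∀ a : ℕ → K,
    (∀ N : ℚ, ∃ M : ℕ, ∀ i ≥ M, ∀ j ≥ M,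
      a i = a j ∨ N ≤ v (algebraMap K L (a i - a j))) →
    ∃ l : K, ∀ N : ℚ, ∃ M : ℕ, ∀ i ≥ M,
      a i = l ∨ N ≤ v (algebraMap K L (a i - l))

/-- The residue field of `K` has characteristic `p`: `p` lies in the maximal
ideal of the valuation ring of `K`. -/
def ResidueCharP (K L : Type) [Field K] [Field L] [Algebra K L]
    (v : L → ℚ) (p : ℕ) : Prop :=
  (p : K) = 0 ∨ 0 < v (algebraMap K L (p : K))

/-- The residue field of `K` is perfect: every unit of the valuation ring is a
`p`-th power modulo the maximal ideal. -/
def PerfectResidue (K L : Type) [Field K] [Field L] [Algebra K L]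
    (v : L → ℚ) (p : ℕ) : Prop :=
  ∀ x : K, x ≠ 0 → v (algebraMap K L x) = 0 →
    ∃ y : K, x = y ^ p ∨ (x - y ^ p ≠ 0 ∧ 0 < v (algebraMap K L (x - y ^ p)))

/-- `ω` is a nonzero Teichmüller representative of `K`: a unit of the valuation
ring admitting `p^m`-th roots for every `m`. -/
def IsTeichmuller (K L : Type) [Field K] [Field L] [Algebra K L]
    (v : L → ℚ) (p : ℕ) (ω : K) : Prop :=
  ω ≠ 0 ∧ v (algebraMap K L ω) = 0 ∧ ∀ m : ℕ, ∃ y : K, y ^ p ^ m = ω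

/-- `ĩ_j = min{n·v(c_h) − h : 1 ≤ h ≤ n, v_p(h) ≤ j}`, computed in `ℕ∞` from
the function `w h = n·(valuation of c_h)` data `w h = v(c_h)`. -/
noncomputable def itildeIdx (p n : ℕ) (w : ℕ → ℕ∞) (j : ℕ) : ℕ∞ :=
  ⨅ h : {h : ℕ // 1 ≤ h ∧ h ≤ n ∧ padicValNat p h ≤ j},
    ((n : ℕ∞) * w h.1 - (h.1 : ℕ∞))

/-- `i_j = min{ĩ_{j'} + (j' − j) n e_K : j ≤ j' ≤ k}`. -/
noncomputable def insepIdx (p n k : ℕ) (eK : ℕ∞) (w : ℕ → ℕ∞) (j : ℕ) : ℕ∞ :=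
  ⨅ j' : {j' : ℕ // j ≤ j' ∧ j' ≤ k},
    itildeIdx p n w j'.1 + ((j'.1 : ℕ∞) - (j : ℕ∞)) * (n : ℕ∞) * eK

/-- The valuation (in `ℕ∞`, with `⊤` for the zero coefficient) of the
coefficient `c_h` of the minimal polynomial
`X^n − c_1 X^{n-1} + ⋯ + (−1)^n c_n` of `πL`, so that
`(−1)^h c_h = coeff (n−h)`. -/
noncomputable def coeffVal (K L : Type) [Field K] [Field L] [Algebra K L]
    (v : L → ℚ) (n : ℕ) (πL : L) (h : ℕ) : ℕ∞ :=
  if (minpoly K πL).coeff (n - h) = 0 then ⊤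
  else ((v (algebraMap K L ((minpoly K πL).coeff (n - h)))).num).toNat

/-- `e_K = v_K(p)`, with `e_K = ∞` when `char K = p`. -/
noncomputable def eAbs (K L : Type) [Field K] [Field L] [Algebra K L]
    (v : L → ℚ) (p : ℕ) : ℕ∞ :=
  if (p : K) = 0 then ⊤ else ((v (algebraMap K L (p : K))).num).toNat

/-- `L/K` has indices of inseparability `i 0, …, i k`: the indices computed
from the minimal polynomial of a uniformizer of `L` are given by `i`. -/
def HasInsepIndices (K L : Type) [Field K] [Field L] [Algebra K L]
    (v : L → ℚ) (p n k : ℕ) (i : ℕ → ℕ∞) : Prop :=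
  ∃ πL : L, v πL = 1 / (n : ℚ) ∧ Algebra.adjoin K {πL} = ⊤ ∧
    ∀ j ≤ k, insepIdx p n k (eAbs K L v p) (coeffVal K L v n πL) j = i j

/-! Comparing valuations of the terms of `π_L^6 = π_K π_L^5 - π_K π_L^4 - π_K` (the Eisenstein
argument) forces `v(π_L) = 1/6`, so `6 ∣ [L : K] ≤ 6` and `f` is the minimal polynomial of `π_L`.
Hence `c_1, c_2, c_6` have valuation `1` and `c_3 = c_4 = c_5 = 0`, giving `ĩ_0 = 6·1 - 2 = 4`
(only `h ∈ {1, 2, 4, 5}` count), `ĩ_1 = 6·1 - 6 = 0`, and `i_0 = min(ĩ_0, ĩ_1 + 6 e_K) = 4`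
because `e_K ≥ 1`. -/

section

variable {K L : Type} [Field K] [Field L] [Algebra K L]

theorem ne_zero_of_aeval_eq_zero_of_coeff_zero_ne_zero {f : K[X]} {x : L}
    (hroot : aeval x f = 0) (h0 : f.coeff 0 ≠ 0) : x ≠ 0 := by
  rintro rfl
  rw [← coeff_zero_eq_aeval_zero', map_eq_zero] at hroot
  exact h0 hroot

theorem minpoly_eq_and_finrank_eq_of_adjoin_eq_top {f : K[X]} {x : L} (hmon : f.Monic)
    (hroot : aeval x f = 0) (hgen : Algebra.adjoin K {x} = ⊤)
    (hdvd : f.natDegree ∣ Module.finrank K L) :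
    minpoly K x = f ∧ Module.finrank K L = f.natDegree := by
  have hint : IsIntegral K x := ⟨f, hmon, by rwa [← aeval_def]⟩
  have hfin : Module.finrank K L = (minpoly K x).natDegree := by
    rw [← IntermediateField.finrank_top',
      ← (IntermediateField.adjoin_simple_eq_top_iff_of_isAlgebraic hint.isAlgebraic).2 hgen,
      IntermediateField.adjoin.finrank hint]
  have hmin_dvd : minpoly K x ∣ f := minpoly.dvd K x hroot
  have hle : Module.finrank K L ≤ f.natDegree :=
    hfin ▸ natDegree_le_of_dvd hmin_dvd hmon.ne_zero
  have hfin_eq : Module.finrank K L = f.natDegree :=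
    le_antisymm hle (Nat.le_of_dvd (hfin ▸ minpoly.natDegree_pos hint) hdvd)
  exact ⟨(eq_of_monic_of_dvd_of_natDegree_le (minpoly.monic hint) hmon hmin_dvd
    (by rw [← hfin, hfin_eq])).symm, hfin_eq⟩

end

namespace ExtValuation

variable {K L : Type} [Field K] [Field L] [Algebra K L] {v : L → ℚ} {n : ℕ}

theorem map_one (hv : ExtValuation K L v n) : v 1 = 0 := by
  have h := hv.map_mul 1 1 one_ne_zero one_ne_zero
  rw [mul_one] at h
  linarith

theorem map_neg (hv : ExtValuation K L v n) {x : L} (hx : x ≠ 0) : v (-x) = v x := by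
  have hsq := hv.map_mul (-1) (-1) (by simp) (by simp)
  rw [neg_mul_neg, one_mul, hv.map_one] at hsq
  rw [← neg_one_mul, hv.map_mul _ _ (by simp) hx]
  linarith

theorem map_pow (hv : ExtValuation K L v n) {x : L} (hx : x ≠ 0) (m : ℕ) :
    v (x ^ m) = m * v x := by
  induction m with
  | zero => simp [hv.map_one]
  | succ m ih =>
    rw [pow_succ, hv.map_mul _ _ (pow_ne_zero _ hx) hx, ih]
    push_cast
    ring

theorem lt_map_add (hv : ExtValuation K L v n) {x y : L} {N : ℚ} (hx : x ≠ 0) (hy : y ≠ 0)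
    (hxy : x + y ≠ 0) (hNx : N < v x) (hNy : N < v y) : N < v (x + y) :=
  lt_of_lt_of_le (lt_min hNx hNy) (hv.map_add x y hx hy hxy)

theorem lt_map_sum (hv : ExtValuation K L v n) {ι : Type*} (s : Finset ι) (g : ι → L) {N : ℚ}
    (hg : ∀ i ∈ s, g i ≠ 0 → N < v (g i)) (hs : ∑ i ∈ s, g i ≠ 0) :
    N < v (∑ i ∈ s, g i) := by
  classical
  induction s using Finset.induction_on with
  | empty => simp at hs
  | insert a s ha ih =>
    rw [Finset.sum_insert ha] at hs ⊢
    have ih' := fun hs => ih (fun i hi => hg i (Finset.mem_insert_of_mem hi)) hs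
    by_cases hga : g a = 0
    · rw [hga, zero_add] at hs ⊢
      exact ih' hs
    by_cases hsum : ∑ i ∈ s, g i = 0
    · rw [hsum, add_zero]
      exact hg a (Finset.mem_insert_self a s) hga
    exact hv.lt_map_add hga hsum hs (hg a (Finset.mem_insert_self a s) hga) (ih' hsum)

theorem one_add_mul_le_map_smul_pow (hv : ExtValuation K L v n) {a : K} {x : L} (ha : a ≠ 0)
    (hva : 1 ≤ v (algebraMap K L a)) (hx : x ≠ 0) (i : ℕ) : 1 + i * v x ≤ v (a • x ^ i) := by
  rw [Algebra.smul_def, hv.map_mul _ _ ((_root_.map_ne_zero _).2 ha) (pow_ne_zero _ hx),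
    hv.map_pow hx]
  linarith

theorem one_div_natDegree_le_map_of_aeval_eq_zero (hv : ExtValuation K L v n) {f : K[X]}
    (hmon : f.Monic) (hdeg : 0 < f.natDegree)
    (hcoeff : ∀ i < f.natDegree, f.coeff i ≠ 0 → 1 ≤ v (algebraMap K L (f.coeff i))) {x : L}
    (hx : x ≠ 0) (hroot : aeval x f = 0) : 1 / f.natDegree ≤ v x := by
  by_contra! hlt
  -- then `x ^ f.natDegree` has strictly smaller valuation than every other term of `f(x)`
  have hdt : f.natDegree * v x < 1 := by
    rwa [lt_div_iff₀ (by exact_mod_cast hdeg), mul_comm] at hlt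
  have hlower : ∑ i ∈ Finset.range f.natDegree, f.coeff i • x ^ i = -x ^ f.natDegree := by
    rw [aeval_eq_sum_range, Finset.sum_range_succ, hmon.coeff_natDegree, one_smul] at hroot
    linear_combination hroot
  have := hv.lt_map_sum _ (fun i => f.coeff i • x ^ i) (N := f.natDegree * v x)
    (fun i hi hterm => ?_) (by rw [hlower]; exact neg_ne_zero.2 (pow_ne_zero _ hx))
  · rw [hlower, hv.map_neg (pow_ne_zero _ hx), hv.map_pow hx] at this
    exact (lt_irrefl _ this).elim
  · have hi := Finset.mem_range.1 hi
    have hai : f.coeff i ≠ 0 := fun h => hterm (by simp [h])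
    refine lt_of_lt_of_le ?_ (hv.one_add_mul_le_map_smul_pow hai (hcoeff i hi hai) hx i)
    have : (i : ℚ) < f.natDegree := by exact_mod_cast hi
    rcases le_or_gt (v x) 0 with ht | ht <;> nlinarith

theorem map_le_one_div_natDegree_of_aeval_eq_zero (hv : ExtValuation K L v n) {f : K[X]}
    (hmon : f.Monic) (hdeg : 0 < f.natDegree)
    (hcoeff : ∀ i < f.natDegree, f.coeff i ≠ 0 → 1 ≤ v (algebraMap K L (f.coeff i)))
    (hconst : f.coeff 0 ≠ 0) (hvconst : v (algebraMap K L (f.coeff 0)) = 1)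
    {x : L} (hroot : aeval x f = 0) : v x ≤ 1 / f.natDegree := by
  by_contra! hgt
  -- then the constant term has strictly smaller valuation than every other term of `f(x)`
  have hdt : 1 < f.natDegree * v x := by
    rwa [div_lt_iff₀ (by exact_mod_cast hdeg), mul_comm] at hgt
  have ht : 0 < v x := lt_trans (by positivity) hgt
  have hx : x ≠ 0 := ne_zero_of_aeval_eq_zero_of_coeff_zero_ne_zero hroot hconst
  have ha0 : algebraMap K L (f.coeff 0) ≠ 0 := by simpa using hconst
  have hupper : ∑ i ∈ Finset.range f.natDegree, f.coeff (i + 1) • x ^ (i + 1) =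
      -algebraMap K L (f.coeff 0) := by
    rw [aeval_eq_sum_range, Finset.sum_range_succ', pow_zero, Algebra.smul_def, mul_one] at hroot
    linear_combination hroot
  have := hv.lt_map_sum _ (fun i => f.coeff (i + 1) • x ^ (i + 1)) (N := 1)
    (fun i hi hterm => ?_) (by rw [hupper]; exact neg_ne_zero.2 ha0)
  · rw [hupper, hv.map_neg ha0, hvconst] at this
    exact (lt_irrefl _ this).elim
  · rcases (show i + 1 ≤ f.natDegree from Finset.mem_range.1 hi).lt_or_eq with hlt | hlast
    · have hai : f.coeff (i + 1) ≠ 0 := fun h => hterm (by simp [h])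
      refine lt_of_lt_of_le ?_ (hv.one_add_mul_le_map_smul_pow hai (hcoeff _ hlt hai) hx _)
      push_cast
      nlinarith
    · rw [hlast, hmon.coeff_natDegree, one_smul, hv.map_pow hx]
      exact hdt

theorem map_eq_of_aeval_eq_zero_of_eisenstein (hv : ExtValuation K L v n) {f : K[X]}
    (hmon : f.Monic) (hdeg : 0 < f.natDegree)
    (hcoeff : ∀ i < f.natDegree, f.coeff i ≠ 0 → 1 ≤ v (algebraMap K L (f.coeff i)))
    (hconst : f.coeff 0 ≠ 0) (hvconst : v (algebraMap K L (f.coeff 0)) = 1)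
    {x : L} (hroot : aeval x f = 0) : v x = 1 / f.natDegree :=
  le_antisymm (hv.map_le_one_div_natDegree_of_aeval_eq_zero hmon hdeg hcoeff hconst hvconst hroot)
    (hv.one_div_natDegree_le_map_of_aeval_eq_zero hmon hdeg hcoeff
      (ne_zero_of_aeval_eq_zero_of_coeff_zero_ne_zero hroot hconst) hroot)

theorem dvd_of_map_eq_inv (hv : ExtValuation K L v n) {x : L} (hx : x ≠ 0)
    {d : ℕ} (hd : d ≠ 0) (hvx : v x = 1 / d) : d ∣ n := by
  rcases eq_or_ne n 0 with rfl | hn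
  · exact dvd_zero d
  obtain ⟨m, hm⟩ := hv.denom x hx
  rw [hvx, div_eq_div_iff (by exact_mod_cast hd) (by exact_mod_cast hn), one_mul] at hm
  have hm' : (n : ℤ) = m * d := by exact_mod_cast hm
  exact Int.natCast_dvd_natCast.1 ⟨m, by rw [hm', mul_comm]⟩

theorem one_le_eAbs {p : ℕ} (hv : ExtValuation K L v n)
    (hres : ResidueCharP K L v p) : 1 ≤ eAbs K L v p := by
  unfold eAbs
  split_ifs with hp
  · exact le_top
  · obtain ⟨m, hm⟩ := hv.int_on_base _ hp
    have hpos : 0 < m := by exact_mod_cast hm ▸ hres.resolve_left hp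
    rw [hm, Rat.num_intCast]
    exact_mod_cast (by omega : 1 ≤ m.toNat)

end ExtValuation

section

variable {K L : Type} [Field K] [Field L] [Algebra K L] {v : L → ℚ}

theorem coeffVal_eq_top {n h : ℕ} {x : L} (hc : (minpoly K x).coeff (n - h) = 0) :
    coeffVal K L v n x h = ⊤ :=
  if_pos hc

theorem coeffVal_eq_one {n h : ℕ} {x : L} (hc : (minpoly K x).coeff (n - h) ≠ 0)
    (hvc : v (algebraMap K L ((minpoly K x).coeff (n - h))) = 1) :
    coeffVal K L v n x h = 1 := by
  simp [coeffVal, hc, hvc]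

end

theorem padicValNat_three_six : padicValNat 3 6 = 1 := by
  have : Fact (Nat.Prime 3) := ⟨Nat.prime_three⟩
  rw [show 6 = 3 * 2 from rfl, padicValNat.mul three_ne_zero two_ne_zero, padicValNat_self,
    padicValNat.eq_zero_of_not_dvd (by decide)]

theorem itildeIdx_eq_zero_of_eq_one {p n j : ℕ} {w : ℕ → ℕ∞} (hn : 1 ≤ n) (hw : w n = 1)
    (hp : padicValNat p n ≤ j) : itildeIdx p n w j = 0 :=
  le_antisymm (iInf_le_of_le ⟨n, hn, le_rfl, hp⟩ (by simp [hw])) zero_le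

theorem itildeIdx_three_six_zero {w : ℕ → ℕ∞} (h1 : w 1 = 1) (h2 : w 2 = 1) (h4 : w 4 = ⊤)
    (h5 : w 5 = ⊤) : itildeIdx 3 6 w 0 = 4 := by
  have h3 : padicValNat 3 3 = 1 := padicValNat_self
  have h6 := padicValNat_three_six
  refine le_antisymm (iInf_le_of_le ⟨2, by norm_num, by norm_num, by norm_num⟩ ?_) (le_iInf ?_)
  · simp only [h2]; decide
  · rintro ⟨h, hh1, hh6, hp⟩
    interval_cases h
    all_goals first | omega | (simp only [*]; decide)

theorem insepIdx_self (p n k : ℕ) (eK : ℕ∞) (w : ℕ → ℕ∞) :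
    insepIdx p n k eK w k = itildeIdx p n w k := by
  refine le_antisymm (iInf_le_of_le ⟨k, le_rfl, le_rfl⟩ (by simp)) (le_iInf ?_)
  rintro ⟨j, hkj, hjk⟩
  obtain rfl := le_antisymm hjk hkj
  simp

theorem insepIdx_zero_of_one (p n : ℕ) (eK : ℕ∞) (w : ℕ → ℕ∞) :
    insepIdx p n 1 eK w 0 = min (itildeIdx p n w 0) (itildeIdx p n w 1 + n * eK) := by
  refine le_antisymm (le_min ?_ ?_) (le_iInf ?_)
  · exact iInf_le_of_le ⟨0, le_rfl, zero_le_one⟩ (by simp)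
  · exact iInf_le_of_le ⟨1, zero_le_one, le_rfl⟩ (by simp)
  · rintro ⟨j, -, hj⟩
    interval_cases j <;> simp

/-- a root of `X^6 − π_K X^5 + π_K X^4 + π_K` over a complete
discretely valued field of residue characteristic 3 generates a totally
ramified extension of degree 6 with indices of inseparability `i₀ = 4` and
`i₁ = 0` (here `n = 6 = 2·3`, `k = 1`). -/
theorem stmt17 (K L : Type) [Field K] [Field L] [Algebra K L]
    (v : L → ℚ) (hv : ExtValuation K L v (Module.finrank K L))
    (hres : ResidueCharP K L v 3)
    (πK : K) (hπK : πK ≠ 0 ∧ v (algebraMap K L πK) = 1)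
    (f : Polynomial K)
    (hf : f = X ^ 6 - C πK * X ^ 5 + C πK * X ^ 4 + C πK)
    (πL : L) (hroot : Polynomial.aeval πL f = 0)
    (hgen : Algebra.adjoin K {πL} = ⊤) :
    Module.finrank K L = 6 ∧ v πL = 1 / 6 ∧
    insepIdx 3 6 1 (eAbs K L v 3) (coeffVal K L v 6 πL) 0 = 4 ∧
    insepIdx 3 6 1 (eAbs K L v 3) (coeffVal K L v 6 πL) 1 = 0 := by
  obtain ⟨hπK0, hπKv⟩ := hπK
  have hmon : f.Monic := by rw [hf]; monicity!
  have hdeg : f.natDegree = 6 := by rw [hf]; compute_degree!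
  have hcoeff : f.coeff 0 = πK ∧ f.coeff 1 = 0 ∧ f.coeff 2 = 0 ∧ f.coeff 3 = 0 ∧
      f.coeff 4 = πK ∧ f.coeff 5 = -πK := by
    simp [hf, coeff_X_pow, coeff_C]
  obtain ⟨hc0, hc1, hc2, hc3, hc4, hc5⟩ := hcoeff
  have hvneg : v (-algebraMap K L πK) = 1 := by
    rw [hv.map_neg (by simpa using hπK0), hπKv]
  have hvπL : v πL = 1 / 6 := by
    have h := hv.map_eq_of_aeval_eq_zero_of_eisenstein hmon (by omega) ?_
      (hc0 ▸ hπK0) (hc0 ▸ hπKv) hroot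
    · rwa [hdeg, Nat.cast_ofNat] at h
    · rw [hdeg]
      intro i hi hi0
      interval_cases i <;> simp_all
  have hπL0 := ne_zero_of_aeval_eq_zero_of_coeff_zero_ne_zero hroot (hc0 ▸ hπK0)
  obtain ⟨hmin, hn⟩ := minpoly_eq_and_finrank_eq_of_adjoin_eq_top hmon hroot hgen
    (hdeg ▸ hv.dvd_of_map_eq_inv hπL0 (by norm_num) hvπL)
  rw [hdeg] at hn
  have hi0 : itildeIdx 3 6 (coeffVal K L v 6 πL) 0 = 4 := itildeIdx_three_six_zero
    (coeffVal_eq_one (by simpa [hmin, hc5]) (by simpa [hmin, hc5]))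
    (coeffVal_eq_one (by simpa [hmin, hc4]) (by simpa [hmin, hc4]))
    (coeffVal_eq_top (by simpa [hmin]))
    (coeffVal_eq_top (by simpa [hmin]))
  have hi1 : itildeIdx 3 6 (coeffVal K L v 6 πL) 1 = 0 := itildeIdx_eq_zero_of_eq_one
    (by norm_num) (coeffVal_eq_one (by simpa [hmin, hc0]) (by simpa [hmin, hc0]))
    padicValNat_three_six.le
  refine ⟨hn, hvπL, ?_, by rw [insepIdx_self, hi1]⟩
  rw [insepIdx_zero_of_one, hi0, hi1, zero_add, min_eq_left]
  exact le_trans (by norm_num) (le_mul_of_one_le_right' (hv.one_le_eAbs hres))
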